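/- Let (X,d) be a metric space, and d_n a sequence of metrics on X converging to d uniformly on a set U × U, with U ⊆ X. Suppose k_n → k in ℝ, and suppose that for each n, every admissible quadruple (q, x₁, x₂, x₃) of points in U satisfies the CBB(k_n) angle comparison ∠̃^{k_n}_{d_n}(q; x₁, x₂) + ∠̃^{k_n}_{d_n}(q; x₂, x₃) + ∠̃^{k_n}_{d_n}(q; x₃, x₁) ≤ 2π. If a quadruple of points in U is admissible for (d, k) with strict perimeter inequalities, then it satisfies the CBB(k) comparison with respect to d. -/

import Mathlib

open Real

/-- The comparison (model) angle at the vertex with adjacent sides `a`, `b` and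
opposite side `c` in the model plane `M²(k)`, via the law of cosines. -/
noncomputable def modelAngle (k a b c : ℝ) : ℝ :=
  if 0 < k then
    arccos ((cos (sqrt k * c) - cos (sqrt k * a) * cos (sqrt k * b)) /
      (sin (sqrt k * a) * sin (sqrt k * b)))
  else if k < 0 then
    arccos ((cosh (sqrt (-k) * a) * cosh (sqrt (-k) * b) - cosh (sqrt (-k) * c)) /
      (sinh (sqrt (-k) * a) * sinh (sqrt (-k) * b)))
  else
    arccos ((a ^ 2 + b ^ 2 - c ^ 2) / (2 * a * b))

/-- The quadruple `(q,x₁,x₂,x₃)` is admissible for curvature parameter `k` and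
(distance function) `d`: every triangle `(q,xᵢ,xⱼ)` has perimeter `< 2π/√k` if
`k > 0`. -/
def cbbQuadAdmissible {X : Type*} (k : ℝ) (d : X → X → ℝ) (q x₁ x₂ x₃ : X) : Prop :=
  0 < k →
    d q x₁ + d q x₂ + d x₁ x₂ < 2 * π / sqrt k ∧
    d q x₂ + d q x₃ + d x₂ x₃ < 2 * π / sqrt k ∧
    d q x₃ + d q x₁ + d x₃ x₁ < 2 * π / sqrt k

open Filter

lemma abs_sin_sub_self_le {x : ℝ} (hx : |x| ≤ 1) : |Real.sin x - x| ≤ |x| ^ 3 := by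
  have h := Real.sin_bound hx
  have h2 : |x| ^ 4 ≤ |x| ^ 3 := pow_le_pow_of_le_one (abs_nonneg x) hx (by norm_num)
  have h3 : |sin x - x| ≤ |sin x - (x - x ^ 3 / 6)| + |x ^ 3 / 6| := by
    have := abs_sub_abs_le_abs_sub (sin x - x) (sin x - (x - x ^ 3 / 6))
    calc |sin x - x| = |(sin x - (x - x ^ 3 / 6)) + (- x ^ 3 / 6)| := by ring_nf
      _ ≤ |sin x - (x - x ^ 3 / 6)| + |(- x ^ 3)/6| := abs_add_le _ _
      _ = |sin x - (x - x ^ 3 / 6)| + |x ^ 3 / 6| := by rw [abs_div, abs_div, abs_neg]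
  have h4 : |x ^ 3 / 6| = |x| ^ 3 / 6 := by rw [abs_div, abs_pow]; norm_num
  nlinarith [abs_nonneg x, pow_nonneg (abs_nonneg x) 3]

lemma abs_sinh_sub_self_le {x : ℝ} (hx : |x| ≤ 1) : |Real.sinh x - x| ≤ |x| ^ 3 := by
  have h1 := Real.exp_bound hx (n := 3) (by norm_num)
  have hx' : |(-x)| ≤ 1 := by rwa [abs_neg]
  have h2 := Real.exp_bound hx' (n := 3) (by norm_num)
  rw [Real.sinh_eq]
  have e1 : ∑ m ∈ Finset.range 3, x ^ m / m.factorial = 1 + x + x ^ 2 / 2 := by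
    simp [Finset.sum_range_succ, Nat.factorial]
  have e2 : ∑ m ∈ Finset.range 3, (-x) ^ m / m.factorial = 1 - x + x ^ 2 / 2 := by
    norm_num [Finset.sum_range_succ]; ring
  rw [e1] at h1; rw [e2, abs_neg] at h2
  norm_num [Nat.factorial] at h1 h2
  have := abs_sub_abs_le_abs_sub (exp x - (1 + x + x ^ 2 / 2)) 0
  have key : |(Real.exp x - Real.exp (-x)) / 2 - x|
      = |(exp x - (1 + x + x ^ 2 / 2)) / 2 - (exp (-x) - (1 - x + x ^ 2 / 2)) / 2| := by
    congr 1; ring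
  rw [key]
  calc |(exp x - (1 + x + x ^ 2 / 2)) / 2 - (exp (-x) - (1 - x + x ^ 2 / 2)) / 2|
      ≤ |(exp x - (1 + x + x ^ 2 / 2)) / 2| + |(exp (-x) - (1 - x + x ^ 2 / 2)) / 2| :=
        abs_sub _ _
    _ = |exp x - (1 + x + x ^ 2 / 2)| / 2 + |exp (-x) - (1 - x + x ^ 2 / 2)| / 2 := by
        rw [abs_div, abs_div]; norm_num
    _ ≤ (|x| ^ 3 * (2/9)) / 2 + (|x| ^ 3 * (2/9)) / 2 := by gcongr
    _ ≤ |x| ^ 3 := by nlinarith [pow_nonneg (abs_nonneg x) 3]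

lemma tendsto_split {α β : Type*} {f : α → β} {l : Filter α} {s : Set α} {x : Filter β}
    (h1 : Filter.Tendsto f (l ⊓ Filter.principal s) x)
    (h2 : Filter.Tendsto f (l ⊓ Filter.principal sᶜ) x) : Filter.Tendsto f l x := by
  have hle : l ≤ (l ⊓ Filter.principal s) ⊔ (l ⊓ Filter.principal sᶜ) := by
    intro X hX
    rcases Filter.mem_sup.1 hX with ⟨hX1, hX2⟩
    rw [Filter.mem_inf_principal] at hX1 hX2
    filter_upwards [hX1, hX2] with a ha1 ha2
    by_cases h : a ∈ s
    · exact ha1 h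
    · exact ha2 (by simpa using h)
  exact (h1.sup h2).mono_left hle

/-- Generic: if `trig` is close to the identity near `0`, then
`trig (s n * x n) / s n → x₀`. -/
lemma key_div {l : Filter ℕ} {s x : ℕ → ℝ} {x₀ : ℝ} (trig : ℝ → ℝ)
    (htrig : ∀ y : ℝ, |y| ≤ 1 → |trig y - y| ≤ |y| ^ 3)
    (hs : Filter.Tendsto s l (nhds 0)) (hsp : ∀ᶠ n in l, 0 < s n)
    (hx : Filter.Tendsto x l (nhds x₀)) :
    Filter.Tendsto (fun n => trig (s n * x n) / s n) l (nhds x₀) := by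
  have hxb : ∀ᶠ n in l, |x n| ≤ |x₀| + 1 :=
    ((hx.abs.eventually_lt_const (lt_add_one |x₀|)).mono fun n h => h.le)
  have hM : (0:ℝ) < |x₀| + 1 := by positivity
  have hsb : ∀ᶠ n in l, s n < 1 / (|x₀| + 1) :=
    hs.eventually_lt_const (by positivity)
  have hsmall : ∀ᶠ n in l, |s n * x n| ≤ 1 := by
    filter_upwards [hxb, hsb, hsp] with n h1 h2 h3
    rw [abs_mul, abs_of_pos h3]
    calc s n * |x n| ≤ (1 / (|x₀| + 1)) * (|x₀| + 1) := by
          apply mul_le_mul h2.le h1 (abs_nonneg _) (by positivity)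
      _ = 1 := by field_simp
  have hres : Filter.Tendsto (fun n => (trig (s n * x n) - s n * x n) / s n) l (nhds 0) := by
    refine squeeze_zero_norm' (a := fun n => s n ^ 2 * (|x₀| + 1) ^ 3) ?_ ?_
    · filter_upwards [hxb, hsp, hsmall] with n h1 h3 h4
      have h5 : |trig (s n * x n) - s n * x n| ≤ |s n * x n| ^ 3 := htrig _ h4
      have : ‖(trig (s n * x n) - s n * x n) / s n‖
          = |trig (s n * x n) - s n * x n| / s n := by
        rw [Real.norm_eq_abs, abs_div, abs_of_pos h3]
      rw [this]
      rw [div_le_iff₀ h3]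
      calc |trig (s n * x n) - s n * x n| ≤ |s n * x n| ^ 3 := h5
        _ = s n ^ 3 * |x n| ^ 3 := by
            rw [abs_mul, mul_pow, abs_of_pos h3]
        _ ≤ s n ^ 3 * (|x₀| + 1) ^ 3 := by
            apply mul_le_mul_of_nonneg_left (pow_le_pow_left₀ (abs_nonneg _) h1 3)
              (by positivity)
        _ = s n ^ 2 * (|x₀| + 1) ^ 3 * s n := by ring
    · have : Filter.Tendsto (fun n => s n ^ 2 * (|x₀| + 1) ^ 3) l
          (nhds (0 ^ 2 * (|x₀| + 1) ^ 3)) := ((hs.pow 2).mul_const _)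
      simpa using this
  have heq : ∀ᶠ n in l, x n + (trig (s n * x n) - s n * x n) / s n
      = trig (s n * x n) / s n := by
    filter_upwards [hsp] with n h3
    field_simp
    ring
  have := (hx.add hres).congr' heq
  simpa using this

lemma div_div_same' {x y c : ℝ} (hc : c ≠ 0) : (x / c) / (y / c) = x / y := by
  rcases eq_or_ne y 0 with h | h
  · simp [h]
  · field_simp

lemma key_sph {l : Filter ℕ} {s a b c : ℕ → ℝ} {a₀ b₀ c₀ : ℝ}
    (hs : Filter.Tendsto s l (nhds 0)) (hsp : ∀ᶠ n in l, 0 < s n)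
    (ha : Filter.Tendsto a l (nhds a₀)) (hb : Filter.Tendsto b l (nhds b₀))
    (hc : Filter.Tendsto c l (nhds c₀)) (ha0 : a₀ ≠ 0) (hb0 : b₀ ≠ 0) :
    Filter.Tendsto (fun n => (cos (s n * c n) - cos (s n * a n) * cos (s n * b n)) /
      (sin (s n * a n) * sin (s n * b n))) l
      (nhds ((a₀ ^ 2 + b₀ ^ 2 - c₀ ^ 2) / (2 * a₀ * b₀))) := by
  have htrig : ∀ y : ℝ, |y| ≤ 1 → |Real.sin y - y| ≤ |y| ^ 3 := fun y h => abs_sin_sub_self_le h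
  set A := fun n => sin (s n * (a n / 2)) / s n with hAdef
  set B := fun n => sin (s n * (b n / 2)) / s n with hBdef
  set C := fun n => sin (s n * (c n / 2)) / s n with hCdef
  have hA : Filter.Tendsto A l (nhds (a₀ / 2)) := key_div _ htrig hs hsp (ha.div_const 2)
  have hB : Filter.Tendsto B l (nhds (b₀ / 2)) := key_div _ htrig hs hsp (hb.div_const 2)
  have hC : Filter.Tendsto C l (nhds (c₀ / 2)) := key_div _ htrig hs hsp (hc.div_const 2)
  have hA' : Filter.Tendsto (fun n => sin (s n * a n) / s n) l (nhds a₀) :=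
    key_div _ htrig hs hsp ha
  have hB' : Filter.Tendsto (fun n => sin (s n * b n) / s n) l (nhds b₀) :=
    key_div _ htrig hs hsp hb
  have htop : Filter.Tendsto
      (fun n => 2 * A n ^ 2 + 2 * B n ^ 2 - 2 * C n ^ 2 - 4 * s n ^ 2 * A n ^ 2 * B n ^ 2) l
      (nhds (2 * (a₀/2) ^ 2 + 2 * (b₀/2) ^ 2 - 2 * (c₀/2) ^ 2
        - 4 * (0:ℝ) ^ 2 * (a₀/2) ^ 2 * (b₀/2) ^ 2)) := by
    exact ((((hA.pow 2).const_mul 2).add ((hB.pow 2).const_mul 2)).sub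
      ((hC.pow 2).const_mul 2)).sub
      ((((hs.pow 2).const_mul 4).mul (hA.pow 2)).mul (hB.pow 2))
  have hbot : Filter.Tendsto (fun n => (sin (s n * a n) / s n) * (sin (s n * b n) / s n)) l
      (nhds (a₀ * b₀)) := hA'.mul hB'
  have hdiv := htop.div hbot (mul_ne_zero ha0 hb0)
  have hval : (2 * (a₀/2) ^ 2 + 2 * (b₀/2) ^ 2 - 2 * (c₀/2) ^ 2
      - 4 * (0:ℝ) ^ 2 * (a₀/2) ^ 2 * (b₀/2) ^ 2) / (a₀ * b₀)
      = (a₀ ^ 2 + b₀ ^ 2 - c₀ ^ 2) / (2 * a₀ * b₀) := by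
    rw [div_eq_div_iff (mul_ne_zero ha0 hb0) (by simp [ha0, hb0] : 2 * a₀ * b₀ ≠ 0)]
    ring
  rw [hval] at hdiv
  apply hdiv.congr'
  filter_upwards [hsp] with n hn
  have hs2 : (s n) ^ 2 ≠ 0 := pow_ne_zero 2 hn.ne'
  have hcos : ∀ u v : ℝ, Real.cos (u * v) = 1 - 2 * Real.sin (u * (v / 2)) ^ 2 := by
    intro u v
    have h1 : u * v = 2 * (u * (v / 2)) := by ring
    rw [h1, Real.cos_two_mul]
    nlinarith [Real.sin_sq_add_cos_sq (u * (v / 2))]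
  have hnum : 2 * A n ^ 2 + 2 * B n ^ 2 - 2 * C n ^ 2 - 4 * s n ^ 2 * A n ^ 2 * B n ^ 2
      = (cos (s n * c n) - cos (s n * a n) * cos (s n * b n)) / s n ^ 2 := by
    rw [hcos (s n) (c n), hcos (s n) (a n), hcos (s n) (b n), hAdef, hBdef, hCdef]
    field_simp
    ring
  have hden : (sin (s n * a n) / s n) * (sin (s n * b n) / s n)
      = (sin (s n * a n) * sin (s n * b n)) / s n ^ 2 := by
    rw [div_mul_div_comm, ← pow_two]
  simp only [Pi.div_apply]
  rw [hnum, hden, div_div_same' hs2]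

lemma key_hyp {l : Filter ℕ} {s a b c : ℕ → ℝ} {a₀ b₀ c₀ : ℝ}
    (hs : Filter.Tendsto s l (nhds 0)) (hsp : ∀ᶠ n in l, 0 < s n)
    (ha : Filter.Tendsto a l (nhds a₀)) (hb : Filter.Tendsto b l (nhds b₀))
    (hc : Filter.Tendsto c l (nhds c₀)) (ha0 : a₀ ≠ 0) (hb0 : b₀ ≠ 0) :
    Filter.Tendsto (fun n => (cosh (s n * a n) * cosh (s n * b n) - cosh (s n * c n)) /
      (sinh (s n * a n) * sinh (s n * b n))) l
      (nhds ((a₀ ^ 2 + b₀ ^ 2 - c₀ ^ 2) / (2 * a₀ * b₀))) := by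
  have htrig : ∀ y : ℝ, |y| ≤ 1 → |Real.sinh y - y| ≤ |y| ^ 3 := fun y h => abs_sinh_sub_self_le h
  set A := fun n => sinh (s n * (a n / 2)) / s n with hAdef
  set B := fun n => sinh (s n * (b n / 2)) / s n with hBdef
  set C := fun n => sinh (s n * (c n / 2)) / s n with hCdef
  have hA : Filter.Tendsto A l (nhds (a₀ / 2)) := key_div _ htrig hs hsp (ha.div_const 2)
  have hB : Filter.Tendsto B l (nhds (b₀ / 2)) := key_div _ htrig hs hsp (hb.div_const 2)
  have hC : Filter.Tendsto C l (nhds (c₀ / 2)) := key_div _ htrig hs hsp (hc.div_const 2)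
  have hA' : Filter.Tendsto (fun n => sinh (s n * a n) / s n) l (nhds a₀) :=
    key_div _ htrig hs hsp ha
  have hB' : Filter.Tendsto (fun n => sinh (s n * b n) / s n) l (nhds b₀) :=
    key_div _ htrig hs hsp hb
  have htop : Filter.Tendsto
      (fun n => 2 * A n ^ 2 + 2 * B n ^ 2 - 2 * C n ^ 2 + 4 * s n ^ 2 * A n ^ 2 * B n ^ 2) l
      (nhds (2 * (a₀/2) ^ 2 + 2 * (b₀/2) ^ 2 - 2 * (c₀/2) ^ 2
        + 4 * (0:ℝ) ^ 2 * (a₀/2) ^ 2 * (b₀/2) ^ 2)) := by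
    exact ((((hA.pow 2).const_mul 2).add ((hB.pow 2).const_mul 2)).sub
      ((hC.pow 2).const_mul 2)).add
      ((((hs.pow 2).const_mul 4).mul (hA.pow 2)).mul (hB.pow 2))
  have hbot : Filter.Tendsto (fun n => (sinh (s n * a n) / s n) * (sinh (s n * b n) / s n)) l
      (nhds (a₀ * b₀)) := hA'.mul hB'
  have hdiv := htop.div hbot (mul_ne_zero ha0 hb0)
  have hval : (2 * (a₀/2) ^ 2 + 2 * (b₀/2) ^ 2 - 2 * (c₀/2) ^ 2
      + 4 * (0:ℝ) ^ 2 * (a₀/2) ^ 2 * (b₀/2) ^ 2) / (a₀ * b₀)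
      = (a₀ ^ 2 + b₀ ^ 2 - c₀ ^ 2) / (2 * a₀ * b₀) := by
    rw [div_eq_div_iff (mul_ne_zero ha0 hb0) (by simp [ha0, hb0] : 2 * a₀ * b₀ ≠ 0)]
    ring
  rw [hval] at hdiv
  apply hdiv.congr'
  filter_upwards [hsp] with n hn
  have hs2 : (s n) ^ 2 ≠ 0 := pow_ne_zero 2 hn.ne'
  have hcosh : ∀ u v : ℝ, Real.cosh (u * v) = 1 + 2 * Real.sinh (u * (v / 2)) ^ 2 := by
    intro u v
    have h1 : u * v = 2 * (u * (v / 2)) := by ring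
    rw [h1, Real.cosh_two_mul, Real.cosh_sq']
    ring
  have hnum : 2 * A n ^ 2 + 2 * B n ^ 2 - 2 * C n ^ 2 + 4 * s n ^ 2 * A n ^ 2 * B n ^ 2
      = (cosh (s n * a n) * cosh (s n * b n) - cosh (s n * c n)) / s n ^ 2 := by
    rw [hcosh (s n) (c n), hcosh (s n) (a n), hcosh (s n) (b n), hAdef, hBdef, hCdef]
    field_simp
    ring
  have hden : (sinh (s n * a n) / s n) * (sinh (s n * b n) / s n)
      = (sinh (s n * a n) * sinh (s n * b n)) / s n ^ 2 := by
    rw [div_mul_div_comm, ← pow_two]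
  simp only [Pi.div_apply]
  rw [hnum, hden, div_div_same' hs2]

noncomputable def modelArg (k a b c : ℝ) : ℝ :=
  if 0 < k then
    (cos (sqrt k * c) - cos (sqrt k * a) * cos (sqrt k * b)) /
      (sin (sqrt k * a) * sin (sqrt k * b))
  else if k < 0 then
    (cosh (sqrt (-k) * a) * cosh (sqrt (-k) * b) - cosh (sqrt (-k) * c)) /
      (sinh (sqrt (-k) * a) * sinh (sqrt (-k) * b))
  else (a ^ 2 + b ^ 2 - c ^ 2) / (2 * a * b)

lemma modelAngle_eq (k a b c : ℝ) : modelAngle k a b c = arccos (modelArg k a b c) := by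
  unfold modelAngle modelArg
  split_ifs <;> rfl

lemma modelAngle_le_pi (k a b c : ℝ) : modelAngle k a b c ≤ π := by
  rw [modelAngle_eq]; exact Real.arccos_le_pi _

lemma modelAngle_zero_left (k b c : ℝ) : modelAngle k 0 b c = π / 2 := by
  rw [modelAngle_eq]
  unfold modelArg
  split_ifs <;> simp [Real.arccos_zero]

lemma modelAngle_zero_middle (k a c : ℝ) : modelAngle k a 0 c = π / 2 := by
  rw [modelAngle_eq]
  unfold modelArg
  split_ifs <;> simp [Real.arccos_zero]

lemma modelArg_tendsto {kn an bn cn : ℕ → ℝ} {k a b c : ℝ}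
    (hk : Filter.Tendsto kn atTop (nhds k)) (han : Filter.Tendsto an atTop (nhds a))
    (hbn : Filter.Tendsto bn atTop (nhds b)) (hcn : Filter.Tendsto cn atTop (nhds c))
    (ha0 : 0 < a) (hb0 : 0 < b)
    (hka : 0 < k → sqrt k * a < π) (hkb : 0 < k → sqrt k * b < π) :
    Filter.Tendsto (fun n => modelArg (kn n) (an n) (bn n) (cn n)) atTop
      (nhds (modelArg k a b c)) := by
  rcases lt_trichotomy k 0 with hneg | hzero | hpos
  · -- k < 0 : hyperbolic branch throughout, continuity
    have hev : ∀ᶠ n in atTop, kn n < 0 := hk.eventually_lt_const hneg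
    have hs : Filter.Tendsto (fun n => sqrt (-(kn n))) atTop (nhds (sqrt (-k))) :=
      (Real.continuous_sqrt.tendsto _).comp hk.neg
    have hnum : Filter.Tendsto
        (fun n => cosh (sqrt (-(kn n)) * an n) * cosh (sqrt (-(kn n)) * bn n)
          - cosh (sqrt (-(kn n)) * cn n)) atTop
        (nhds (cosh (sqrt (-k) * a) * cosh (sqrt (-k) * b) - cosh (sqrt (-k) * c))) :=
      (((Real.continuous_cosh.tendsto _).comp (hs.mul han)).mul
        ((Real.continuous_cosh.tendsto _).comp (hs.mul hbn))).sub
        ((Real.continuous_cosh.tendsto _).comp (hs.mul hcn))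
    have hden : Filter.Tendsto
        (fun n => sinh (sqrt (-(kn n)) * an n) * sinh (sqrt (-(kn n)) * bn n)) atTop
        (nhds (sinh (sqrt (-k) * a) * sinh (sqrt (-k) * b))) :=
      ((Real.continuous_sinh.tendsto _).comp (hs.mul han)).mul
        ((Real.continuous_sinh.tendsto _).comp (hs.mul hbn))
    have hsq : 0 < sqrt (-k) := Real.sqrt_pos.2 (by linarith)
    have hdne : sinh (sqrt (-k) * a) * sinh (sqrt (-k) * b) ≠ 0 :=
      mul_ne_zero (Real.sinh_pos_iff.2 (mul_pos hsq ha0)).ne'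
        (Real.sinh_pos_iff.2 (mul_pos hsq hb0)).ne'
    have hdiv := hnum.div hden hdne
    have hval : modelArg k a b c
        = (cosh (sqrt (-k) * a) * cosh (sqrt (-k) * b) - cosh (sqrt (-k) * c)) /
          (sinh (sqrt (-k) * a) * sinh (sqrt (-k) * b)) := by
      unfold modelArg
      rw [if_neg (by linarith), if_pos hneg]
    rw [hval]
    apply hdiv.congr'
    filter_upwards [hev] with n hn
    unfold modelArg
    rw [if_neg (by linarith), if_pos hn]
    simp only [Pi.div_apply]
  · -- k = 0 : split into three cases on the sign of kn n
    subst hzero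
    have hlim : modelArg 0 a b c = (a ^ 2 + b ^ 2 - c ^ 2) / (2 * a * b) := by
      unfold modelArg
      rw [if_neg (lt_irrefl 0), if_neg (lt_irrefl 0)]
    rw [hlim]
    apply tendsto_split (s := {n | 0 < kn n})
    · -- spherical part
      set l := atTop ⊓ Filter.principal {n | 0 < kn n} with hl
      have hmem : ∀ᶠ n in l, 0 < kn n :=
        Filter.mem_inf_of_right (Filter.mem_principal_self _)
      have hk0 : Filter.Tendsto kn l (nhds 0) := hk.mono_left inf_le_left
      have hs : Filter.Tendsto (fun n => sqrt (kn n)) l (nhds 0) := by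
        have := (Real.continuous_sqrt.tendsto (0:ℝ)).comp hk0
        simpa [Function.comp_def] using this
      have hsp : ∀ᶠ n in l, 0 < sqrt (kn n) := by
        filter_upwards [hmem] with n hn; exact Real.sqrt_pos.2 hn
      have := key_sph hs hsp (han.mono_left inf_le_left) (hbn.mono_left inf_le_left)
        (hcn.mono_left inf_le_left) ha0.ne' hb0.ne'
      apply this.congr'
      filter_upwards [hmem] with n hn
      unfold modelArg
      rw [if_pos hn]
    · apply tendsto_split (s := {n | kn n < 0})
      · -- hyperbolic part
        set l := atTop ⊓ Filter.principal {n | 0 < kn n}ᶜ ⊓ Filter.principal {n | kn n < 0}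
          with hl
        have hmem : ∀ᶠ n in l, kn n < 0 :=
          Filter.mem_inf_of_right (Filter.mem_principal_self _)
        have hle : l ≤ atTop := le_trans inf_le_left inf_le_left
        have hk0 : Filter.Tendsto kn l (nhds 0) := hk.mono_left hle
        have hs : Filter.Tendsto (fun n => sqrt (-(kn n))) l (nhds 0) := by
          have := (Real.continuous_sqrt.tendsto (0:ℝ)).comp
            (f := fun n => -(kn n)) (by simpa using hk0.neg)
          simpa [Function.comp_def] using this
        have hsp : ∀ᶠ n in l, 0 < sqrt (-(kn n)) := by
          filter_upwards [hmem] with n hn; exact Real.sqrt_pos.2 (by linarith)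
        have := key_hyp hs hsp (han.mono_left hle) (hbn.mono_left hle)
          (hcn.mono_left hle) ha0.ne' hb0.ne'
        apply this.congr'
        filter_upwards [hmem] with n hn
        unfold modelArg
        rw [if_neg (by linarith), if_pos hn]
      · -- zero part
        set l := atTop ⊓ Filter.principal {n | 0 < kn n}ᶜ ⊓ Filter.principal {n | kn n < 0}ᶜ
          with hl
        have hmem1 : ∀ᶠ n in l, ¬ 0 < kn n := by
          have : {n | 0 < kn n}ᶜ ∈ l :=
            Filter.mem_of_superset (Filter.mem_inf_of_left
              (Filter.mem_inf_of_right (Filter.mem_principal_self _))) (fun x hx => hx)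
          filter_upwards [this] with n hn; exact hn
        have hmem2 : ∀ᶠ n in l, ¬ kn n < 0 :=
          Filter.mem_inf_of_right (Filter.mem_principal_self _)
        have hle : l ≤ atTop := le_trans inf_le_left inf_le_left
        have hden : (2 : ℝ) * a * b ≠ 0 := by positivity
        have hdiv := ((((han.mono_left hle).pow 2).add ((hbn.mono_left hle).pow 2)).sub
          ((hcn.mono_left hle).pow 2)).div
          ((((han.mono_left hle).const_mul 2)).mul (hbn.mono_left hle)) hden
        apply hdiv.congr'
        filter_upwards [hmem1, hmem2] with n hn1 hn2
        unfold modelArg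
        rw [if_neg hn1, if_neg hn2]
        simp only [Pi.div_apply]
  · -- k > 0 : spherical branch throughout, continuity
    have hev : ∀ᶠ n in atTop, 0 < kn n := hk.eventually_const_lt hpos
    have hs : Filter.Tendsto (fun n => sqrt (kn n)) atTop (nhds (sqrt k)) :=
      (Real.continuous_sqrt.tendsto _).comp hk
    have hnum : Filter.Tendsto
        (fun n => cos (sqrt (kn n) * cn n) - cos (sqrt (kn n) * an n) * cos (sqrt (kn n) * bn n))
        atTop (nhds (cos (sqrt k * c) - cos (sqrt k * a) * cos (sqrt k * b))) :=
      ((Real.continuous_cos.tendsto _).comp (hs.mul hcn)).sub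
        (((Real.continuous_cos.tendsto _).comp (hs.mul han)).mul
          ((Real.continuous_cos.tendsto _).comp (hs.mul hbn)))
    have hden : Filter.Tendsto
        (fun n => sin (sqrt (kn n) * an n) * sin (sqrt (kn n) * bn n)) atTop
        (nhds (sin (sqrt k * a) * sin (sqrt k * b))) :=
      ((Real.continuous_sin.tendsto _).comp (hs.mul han)).mul
        ((Real.continuous_sin.tendsto _).comp (hs.mul hbn))
    have hsq : 0 < sqrt k := Real.sqrt_pos.2 hpos
    have hdne : sin (sqrt k * a) * sin (sqrt k * b) ≠ 0 :=
      mul_ne_zero (Real.sin_pos_of_pos_of_lt_pi (mul_pos hsq ha0) (hka hpos)).ne'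
        (Real.sin_pos_of_pos_of_lt_pi (mul_pos hsq hb0) (hkb hpos)).ne'
    have hdiv := hnum.div hden hdne
    have hval : modelArg k a b c
        = (cos (sqrt k * c) - cos (sqrt k * a) * cos (sqrt k * b)) /
          (sin (sqrt k * a) * sin (sqrt k * b)) := by
      unfold modelArg
      rw [if_pos hpos]
    rw [hval]
    apply hdiv.congr'
    filter_upwards [hev] with n hn
    unfold modelArg
    rw [if_pos hn]
    simp only [Pi.div_apply]

lemma modelAngle_tendsto {kn an bn cn : ℕ → ℝ} {k a b c : ℝ}
    (hk : Filter.Tendsto kn atTop (nhds k)) (han : Filter.Tendsto an atTop (nhds a))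
    (hbn : Filter.Tendsto bn atTop (nhds b)) (hcn : Filter.Tendsto cn atTop (nhds c))
    (ha0 : 0 < a) (hb0 : 0 < b)
    (hka : 0 < k → sqrt k * a < π) (hkb : 0 < k → sqrt k * b < π) :
    Filter.Tendsto (fun n => modelAngle (kn n) (an n) (bn n) (cn n)) atTop
      (nhds (modelAngle k a b c)) := by
  simp only [modelAngle_eq]
  exact (Real.continuous_arccos.tendsto _).comp
    (modelArg_tendsto hk han hbn hcn ha0 hb0 hka hkb)

/-- If metrics `d_n → d` uniformly on `U × U` and `k_n → k`, and every admissible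
quadruple in `U` satisfies the `CBB(k_n)` angle comparison for `d_n`, then every
quadruple in `U` admissible for `(d,k)` satisfies the `CBB(k)` comparison for `d`. -/
theorem cbb_comparison_limit {X : Type*} [MetricSpace X] (U : Set X)
    (dn : ℕ → X → X → ℝ)
    (hmet : ∀ n : ℕ, (∀ x, dn n x x = 0) ∧ (∀ x y, dn n x y = dn n y x) ∧
      (∀ x y, 0 ≤ dn n x y) ∧ (∀ x y z, dn n x z ≤ dn n x y + dn n y z))
    (hunif : TendstoUniformlyOn (fun n (z : X × X) => dn n z.1 z.2)
      (fun z => dist z.1 z.2) Filter.atTop (U ×ˢ U))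
    (kn : ℕ → ℝ) (k : ℝ) (hk : Filter.Tendsto kn Filter.atTop (nhds k))
    (hcomp : ∀ n : ℕ, ∀ q ∈ U, ∀ x₁ ∈ U, ∀ x₂ ∈ U, ∀ x₃ ∈ U,
      cbbQuadAdmissible (kn n) (dn n) q x₁ x₂ x₃ →
        modelAngle (kn n) (dn n q x₁) (dn n q x₂) (dn n x₁ x₂) +
        modelAngle (kn n) (dn n q x₂) (dn n q x₃) (dn n x₂ x₃) +
        modelAngle (kn n) (dn n q x₃) (dn n q x₁) (dn n x₃ x₁) ≤ 2 * π) :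
    ∀ q ∈ U, ∀ x₁ ∈ U, ∀ x₂ ∈ U, ∀ x₃ ∈ U,
      cbbQuadAdmissible k (fun a b => dist a b) q x₁ x₂ x₃ →
        modelAngle k (dist q x₁) (dist q x₂) (dist x₁ x₂) +
        modelAngle k (dist q x₂) (dist q x₃) (dist x₂ x₃) +
        modelAngle k (dist q x₃) (dist q x₁) (dist x₃ x₁) ≤ 2 * π := by
  intro q hq x₁ hx₁ x₂ hx₂ x₃ hx₃ hadm
  -- degenerate cases: some distance from q vanishes
  by_cases hA : dist q x₁ = 0
  · have h1 : modelAngle k (dist q x₁) (dist q x₂) (dist x₁ x₂) = π / 2 := by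
      rw [hA]; exact modelAngle_zero_left _ _ _
    have h3 : modelAngle k (dist q x₃) (dist q x₁) (dist x₃ x₁) = π / 2 := by
      rw [hA]; exact modelAngle_zero_middle _ _ _
    have h2 := modelAngle_le_pi k (dist q x₂) (dist q x₃) (dist x₂ x₃)
    linarith
  by_cases hB : dist q x₂ = 0
  · have h1 : modelAngle k (dist q x₁) (dist q x₂) (dist x₁ x₂) = π / 2 := by
      rw [hB]; exact modelAngle_zero_middle _ _ _
    have h2 : modelAngle k (dist q x₂) (dist q x₃) (dist x₂ x₃) = π / 2 := by
      rw [hB]; exact modelAngle_zero_left _ _ _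
    have h3 := modelAngle_le_pi k (dist q x₃) (dist q x₁) (dist x₃ x₁)
    linarith
  by_cases hC : dist q x₃ = 0
  · have h2 : modelAngle k (dist q x₂) (dist q x₃) (dist x₂ x₃) = π / 2 := by
      rw [hC]; exact modelAngle_zero_middle _ _ _
    have h3 : modelAngle k (dist q x₃) (dist q x₁) (dist x₃ x₁) = π / 2 := by
      rw [hC]; exact modelAngle_zero_left _ _ _
    have h1 := modelAngle_le_pi k (dist q x₁) (dist q x₂) (dist x₁ x₂)
    linarith
  -- nondegenerate case
  have hA0 : 0 < dist q x₁ := lt_of_le_of_ne dist_nonneg (Ne.symm hA)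
  have hB0 : 0 < dist q x₂ := lt_of_le_of_ne dist_nonneg (Ne.symm hB)
  have hC0 : 0 < dist q x₃ := lt_of_le_of_ne dist_nonneg (Ne.symm hC)
  -- limits of the approximating distances
  have hten : ∀ y ∈ U, ∀ z ∈ U,
      Filter.Tendsto (fun n => dn n y z) Filter.atTop (nhds (dist y z)) := by
    intro y hy z hz
    exact hunif.tendsto_at (Set.mk_mem_prod hy hz)
  have han := hten q hq x₁ hx₁
  have hbn := hten q hq x₂ hx₂
  have hcn := hten q hq x₃ hx₃
  have h12 := hten x₁ hx₁ x₂ hx₂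
  have h23 := hten x₂ hx₂ x₃ hx₃
  have h31 := hten x₃ hx₃ x₁ hx₁
  -- strict model-size bounds for the sides from q
  have hbound : 0 < k → sqrt k * dist q x₁ < π ∧ sqrt k * dist q x₂ < π ∧
      sqrt k * dist q x₃ < π := by
    intro hk'
    obtain ⟨hp1, hp2, hp3⟩ := hadm hk'
    have hp1' : dist q x₁ + dist q x₂ + dist x₁ x₂ < 2 * π / sqrt k := hp1
    have hp2' : dist q x₂ + dist q x₃ + dist x₂ x₃ < 2 * π / sqrt k := hp2
    have hsq : 0 < sqrt k := Real.sqrt_pos.2 hk'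
    have t1 : dist q x₁ ≤ dist q x₂ + dist x₁ x₂ := by
      rw [dist_comm x₁ x₂]; exact dist_triangle q x₂ x₁
    have t2 : dist q x₂ ≤ dist q x₁ + dist x₁ x₂ := dist_triangle q x₁ x₂
    have t3 : dist q x₃ ≤ dist q x₂ + dist x₂ x₃ := dist_triangle q x₂ x₃
    have key : ∀ r : ℝ, 2 * r < 2 * π / sqrt k → sqrt k * r < π := by
      intro r hr
      have hh : 2 * π / sqrt k = 2 * (π / sqrt k) := by ring
      have h2 : r < π / sqrt k := by rw [hh] at hr; linarith
      calc sqrt k * r < sqrt k * (π / sqrt k) := mul_lt_mul_of_pos_left h2 hsq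
        _ = π := by field_simp
    exact ⟨key _ (by linarith), key _ (by linarith), key _ (by linarith)⟩
  -- the three model angles converge
  have T1 := modelAngle_tendsto hk han hbn h12 hA0 hB0
    (fun h => (hbound h).1) (fun h => (hbound h).2.1)
  have T2 := modelAngle_tendsto hk hbn hcn h23 hB0 hC0
    (fun h => (hbound h).2.1) (fun h => (hbound h).2.2)
  have T3 := modelAngle_tendsto hk hcn han h31 hC0 hA0
    (fun h => (hbound h).2.2) (fun h => (hbound h).1)
  have hsum := (T1.add T2).add T3
  -- a uniform bound separating the perimeters from the model size
  obtain ⟨M, hM0, hMP1, hMP2, hMP3, hMk⟩ : ∃ M : ℝ, 0 < M ∧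
      dist q x₁ + dist q x₂ + dist x₁ x₂ < M ∧
      dist q x₂ + dist q x₃ + dist x₂ x₃ < M ∧
      dist q x₃ + dist q x₁ + dist x₃ x₁ < M ∧ k < (2 * π / M) ^ 2 := by
    set P₁ := dist q x₁ + dist q x₂ + dist x₁ x₂ with hP₁
    set P₂ := dist q x₂ + dist q x₃ + dist x₂ x₃ with hP₂
    set P₃ := dist q x₃ + dist q x₁ + dist x₃ x₁ with hP₃
    have hP1n : 0 ≤ P₁ := by positivity
    have hmx1 : P₁ ≤ max (max P₁ P₂) P₃ := le_max_of_le_left (le_max_left _ _)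
    have hmx2 : P₂ ≤ max (max P₁ P₂) P₃ := le_max_of_le_left (le_max_right _ _)
    have hmx3 : P₃ ≤ max (max P₁ P₂) P₃ := le_max_right _ _
    rcases le_or_gt k 0 with hk0 | hk0
    · refine ⟨max (max P₁ P₂) P₃ + 1, by linarith, by linarith, by linarith, by linarith, ?_⟩
      have hMpos : (0:ℝ) < max (max P₁ P₂) P₃ + 1 := by linarith
      have : 0 < (2 * π / (max (max P₁ P₂) P₃ + 1)) ^ 2 := by positivity
      linarith
    · obtain ⟨hp1, hp2, hp3⟩ := hadm hk0
      have hp1' : P₁ < 2 * π / sqrt k := hp1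
      have hp2' : P₂ < 2 * π / sqrt k := hp2
      have hp3' : P₃ < 2 * π / sqrt k := hp3
      have hsq : 0 < sqrt k := Real.sqrt_pos.2 hk0
      have hT : 0 < 2 * π / sqrt k := by positivity
      have hmax : max (max P₁ P₂) P₃ < 2 * π / sqrt k := max_lt (max_lt hp1' hp2') hp3'
      set M := (max (max P₁ P₂) P₃ + 2 * π / sqrt k) / 2 with hM
      have hM0 : 0 < M := by rw [hM]; linarith
      have hMT : M < 2 * π / sqrt k := by rw [hM]; linarith
      refine ⟨M, hM0, by rw [hM]; linarith, by rw [hM]; linarith, by rw [hM]; linarith, ?_⟩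
      have h1 : M * sqrt k < 2 * π := (lt_div_iff₀ hsq).1 hMT
      have h2 : sqrt k < 2 * π / M := (lt_div_iff₀ hM0).2 (by linarith [mul_comm M (sqrt k)])
      calc k = sqrt k ^ 2 := (Real.sq_sqrt hk0.le).symm
        _ < (2 * π / M) ^ 2 := by
          apply pow_lt_pow_left₀ h2 (Real.sqrt_nonneg k)
          norm_num
  -- eventually the quadruple is admissible for `(kn n, dn n)`
  have e1 := ((han.add hbn).add h12).eventually_lt_const hMP1
  have e2 := ((hbn.add hcn).add h23).eventually_lt_const hMP2
  have e3 := ((hcn.add han).add h31).eventually_lt_const hMP3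
  have ek := hk.eventually_lt_const hMk
  have hev_adm : ∀ᶠ n in Filter.atTop, cbbQuadAdmissible (kn n) (dn n) q x₁ x₂ x₃ := by
    filter_upwards [e1, e2, e3, ek] with n g1 g2 g3 gk
    intro hkn
    have hsqn : 0 < sqrt (kn n) := Real.sqrt_pos.2 hkn
    have h1 : sqrt (kn n) < 2 * π / M := by
      have h := Real.sqrt_lt_sqrt hkn.le gk
      rwa [Real.sqrt_sq (by positivity)] at h
    have h2 : M < 2 * π / sqrt (kn n) := by
      rw [lt_div_iff₀ hsqn]
      have h := (lt_div_iff₀ hM0).1 h1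
      linarith [mul_comm M (sqrt (kn n)), mul_comm (sqrt (kn n)) M]
    exact ⟨by linarith, by linarith, by linarith⟩
  have hfin : ∀ᶠ n in Filter.atTop,
      modelAngle (kn n) (dn n q x₁) (dn n q x₂) (dn n x₁ x₂) +
      modelAngle (kn n) (dn n q x₂) (dn n q x₃) (dn n x₂ x₃) +
      modelAngle (kn n) (dn n q x₃) (dn n q x₁) (dn n x₃ x₁) ≤ 2 * π :=
    hev_adm.mono fun n h => hcomp n q hq x₁ hx₁ x₂ hx₂ x₃ hx₃ h
  exact le_of_tendsto hsum hfin
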